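/- arXiv:1512.00501 — 2 statements merged into one kernel-verified Lean document; each statement's English description precedes it below -/
import Mathlib

section
/- Let N and n be natural numbers with n ≤ N. For every index x : Fin N, the number of choice sequences of length n after which x is NOT selected, multiplied by N, equals (N − n) times the total number of choice sequences ∏_{t=0}^{n−1}(N−t). Equivalently, the probability that x is not selected after n iterations of the partial shuffle is (N − n)/N. -/
/-! Condition on the first `n` choices. If `x` then sits at a position `q < N - n`, iteration `n`
swaps slot `N - 1 - n` with slot `j n < N - n`, and this moves `x` into the selected region
`[N - 1 - n, N)` exactly when `j n = q`; so `N - n - 1` of the `N - n` choices keep `x`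
unselected. The count is therefore `(N - 1)(N - 2)⋯(N - n) = (N - 1).descFactorial n`, and
`(N - 1).descFactorial n * N = (N - n) * N.descFactorial n`. -/

open Finset Equiv

/-- The permutation of `Fin N` produced by `k` iterations of the partial
Fisher–Yates shuffle driven by the choice sequence `j`: iteration `t`
(for `t = 0, …, k-1`) swaps the array entries at positions `N-1-t` and
`j t`, the iterations being performed left-to-right (`t = 0` first).
As a permutation this is `swap (N-1) (j 0) * ⋯ * swap (N-1-(k-1)) (j (k-1))`,
so that `fyPerm N k j p` is the final content of array slot `p` when the
array is initialized with `a[p] = p`. -/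
def fyPerm (N k : ℕ) (j : ∀ t : Fin k, Fin (N - (t : ℕ))) : Equiv.Perm (Fin N) :=
  (List.ofFn fun t : Fin k =>
      Equiv.swap
        (⟨N - 1 - (t : ℕ), by have := (j t).isLt; omega⟩ : Fin N)
        (⟨((j t) : ℕ), by have := (j t).isLt; omega⟩ : Fin N)).prod

theorem Equiv.swap_apply_lt_iff {α : Type*} [LinearOrder α] {p a q : α} (ha : a ≤ p) :
    swap p a q < p ↔ q ≤ p ∧ a ≠ q := by
  rw [swap_apply_def]
  split_ifs with hqp hqa
  · subst hqp; simp [lt_iff_le_and_ne, ha]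
  · subst hqa; simp [ha]
  · constructor
    · intro h; exact ⟨h.le, Ne.symm hqa⟩
    · rintro ⟨h, -⟩; exact lt_of_le_of_ne h hqp

theorem Fin.card_filter_snoc {n : ℕ} {α : Fin (n + 1) → Type*} [∀ i, Fintype (α i)]
    (P : (∀ i, α i) → Prop) [DecidablePred P] :
    #{f | P f} = ∑ g : ∀ i : Fin n, α i.castSucc, #{a : α (Fin.last n) | P (Fin.snoc g a)} := by
  simp only [card_filter]
  rw [← (Fin.snocEquiv α).sum_comp, Fintype.sum_prod_type_right]
  rfl

theorem Fin.card_filter_castLE_ne {m N : ℕ} (h : m ≤ N) (q : Fin N) (hq : (q : ℕ) < m) :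
    #{a : Fin m | Fin.castLE h a ≠ q} = m - 1 := by
  have : ({a : Fin m | Fin.castLE h a ≠ q} : Finset _) = univ.erase ⟨q, hq⟩ := by
    ext a; simp [Fin.ext_iff]
  rw [this, card_erase_of_mem (mem_univ _), card_univ, Fintype.card_fin]

section FisherYates

variable {N n : ℕ}

theorem fyPerm_snoc (j : ∀ t : Fin n, Fin (N - (t : ℕ))) (a : Fin (N - n)) :
    fyPerm N (n + 1) (Fin.snoc j a) =
      fyPerm N n j * swap ⟨N - 1 - n, by have := a.isLt; omega⟩ (Fin.castLE (N.sub_le n) a) := by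
  rw [fyPerm, List.ofFn_succ', List.concat_eq_append, List.prod_append, List.prod_singleton,
    fyPerm]
  simp only [Fin.snoc_castSucc, Fin.val_castSucc, Fin.snoc_last, Fin.val_last]
  rfl

theorem card_filter_fyPerm_snoc_inv_lt (j : ∀ t : Fin n, Fin (N - (t : ℕ))) (x : Fin N) :
    #{a : Fin (N - n) | (((fyPerm N (n + 1) (Fin.snoc j a))⁻¹ x : Fin N) : ℕ) < N - (n + 1)} =
      if (((fyPerm N n j)⁻¹ x : Fin N) : ℕ) < N - n then N - n - 1 else 0 := by
  set q := (fyPerm N n j)⁻¹ x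
  have key : ∀ a : Fin (N - n),
      (((fyPerm N (n + 1) (Fin.snoc j a))⁻¹ x : Fin N) : ℕ) < N - (n + 1) ↔
        (q : ℕ) < N - n ∧ Fin.castLE (N.sub_le n) a ≠ q := by
    intro a
    have ha := a.isLt
    rw [fyPerm_snoc, mul_inv_rev, Perm.mul_apply, swap_inv]
    have := swap_apply_lt_iff (p := ⟨N - 1 - n, by omega⟩) (q := q)
      (a := Fin.castLE (N.sub_le n) a) (Fin.le_def.2 (by simp; omega))
    simp only [Fin.lt_def, Fin.le_def] at this
    rw [show N - (n + 1) = N - 1 - n by omega]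
    exact this.trans (and_congr_left' (by omega))
  simp_rw [key]
  split_ifs with hq
  · simpa [hq] using Fin.card_filter_castLE_ne (N.sub_le n) q hq
  · simp [hq]

theorem card_filter_fyPerm_inv_lt (x : Fin N) :
    #{j : ∀ t : Fin n, Fin (N - (t : ℕ)) | (((fyPerm N n j)⁻¹ x : Fin N) : ℕ) < N - n} =
      (N - 1).descFactorial n := by
  induction n with
  | zero => simp
  | succ n ih =>
    calc _ = ∑ j : ∀ t : Fin n, Fin (N - (t : ℕ)),
          if (((fyPerm N n j)⁻¹ x : Fin N) : ℕ) < N - n then N - n - 1 else 0 :=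
          (Fin.card_filter_snoc _).trans
            (sum_congr rfl fun j _ => card_filter_fyPerm_snoc_inv_lt j x)
      _ = #{j : ∀ t : Fin n, Fin (N - (t : ℕ)) | (((fyPerm N n j)⁻¹ x : Fin N) : ℕ) < N - n} *
          (N - n - 1) := by
        rw [← sum_filter, sum_const, smul_eq_mul]
      _ = (N - 1).descFactorial (n + 1) := by
        rw [ih, Nat.descFactorial_succ, mul_comm, Nat.sub_right_comm]

end FisherYates

theorem fy_not_selected_count_general (N n : ℕ) (x : Fin N) :
    (Finset.univ.filter fun j : ∀ t : Fin n, Fin (N - (t : ℕ)) =>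
        (((fyPerm N n j)⁻¹ x : Fin N) : ℕ) < N - n).card * N
      = (N - n) * ∏ t ∈ Finset.range n, (N - t) := by
  obtain ⟨M, rfl⟩ : ∃ M, N = M + 1 := ⟨N - 1, by have := x.pos; omega⟩
  rw [card_filter_fyPerm_inv_lt, ← Nat.descFactorial_eq_prod_range, Nat.add_sub_cancel,
    Nat.succ_descFactorial, mul_comm]

/-- The probability that a fixed index `x : Fin N` is *not* selected after
`n` iterations of the partial Fisher–Yates shuffle is `(N - n) / N`: the
number of choice sequences of length `n` after which `x` is not selected
(i.e. `(fyPerm N n j)⁻¹ x < N - n`), multiplied by `N`, equals `N - n`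
times the total number `∏_{t<n} (N - t)` of choice sequences. -/
theorem fy_not_selected_count (N n : ℕ) (hn : n ≤ N) (x : Fin N) :
    (Finset.univ.filter fun j : ∀ t : Fin n, Fin (N - (t : ℕ)) =>
        (((fyPerm N n j)⁻¹ x : Fin N) : ℕ) < N - n).card * N
      = (N - n) * ∏ t ∈ Finset.range n, (N - t) :=
  fy_not_selected_count_general N n x
end

section
/- Let N and k be natural numbers with k ≤ N. For every subset S of Fin N with cardinality k, the number of choice sequences whose selected set equals S is exactly k!; consequently, under the uniform distribution on choice sequences, each k-element subset of {0,…,N−1} is the selected set with the same probability k!·(N−k)!/N! = 1/C(N,k), i.e. the partial Fisher–Yates shuffle selects a k-subset uniformly at random. -/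
open Finset Nat

section Embedding

variable {α β : Type*} [Fintype α]

theorem Finset.map_univ_eq_iff_forall_mem {S : Finset β} (hS : #S = Fintype.card α)
    (f : α ↪ β) : univ.map f = S ↔ ∀ a, f a ∈ S := by
  refine ⟨fun h a => h ▸ mem_map_of_mem f (mem_univ a), fun h => ?_⟩
  refine eq_of_subset_of_card_le (fun b hb => ?_) (by rw [hS, card_map, card_univ])
  obtain ⟨a, -, rfl⟩ := mem_map.mp hb
  exact h a

theorem card_filter_embedding_map_univ_eq [Fintype β] [DecidableEq β] (S : Finset β)
    (hS : #S = Fintype.card α) :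
    #{f : α ↪ β | univ.map f = S} = (Fintype.card α)! := by
  rw [← Fintype.card_subtype, Fintype.card_congr ((Equiv.subtypeEquivRight
      (Finset.map_univ_eq_iff_forall_mem hS)).trans (Equiv.codRestrict α (S : Set β))),
    Fintype.card_embedding_eq]
  simp only [coe_sort_coe, Fintype.card_coe, hS, Nat.descFactorial_self]

end Embedding

lemma fyPerm_succ (N k : ℕ) (j : ∀ t : Fin (k + 1), Fin (N - (t : ℕ))) :
    fyPerm N (k + 1) j = fyPerm N k (fun t => j t.castSucc) *
      Equiv.swap
        (⟨N - 1 - k, by have := (j (Fin.last k)).isLt; omega⟩ : Fin N)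
        (⟨j (Fin.last k), by have := (j (Fin.last k)).isLt; omega⟩ : Fin N) := by
  rw [fyPerm, List.ofFn_succ', List.concat_eq_append, List.prod_append, List.prod_singleton]
  rfl

def fySelected (N k : ℕ) (j : ∀ t : Fin k, Fin (N - (t : ℕ))) (t : Fin k) : Fin N :=
  fyPerm N k j ⟨N - 1 - t, by have := (j t).isLt; omega⟩

lemma fySelected_castSucc (N k : ℕ) (j : ∀ t : Fin (k + 1), Fin (N - (t : ℕ))) (t : Fin k) :
    fySelected N (k + 1) j t.castSucc = fySelected N k (fun t => j t.castSucc) t := by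
  have hj := (j (Fin.last k)).isLt
  have ht := t.isLt
  simp only [Fin.val_last] at hj
  rw [fySelected, fyPerm_succ, Equiv.Perm.mul_apply, Equiv.swap_apply_of_ne_of_ne] <;>
    simp only [fySelected, ne_eq, Fin.mk.injEq, Fin.val_castSucc] <;> omega

lemma fySelected_last (N k : ℕ) (j : ∀ t : Fin (k + 1), Fin (N - (t : ℕ))) :
    fySelected N (k + 1) j (Fin.last k) =
      fyPerm N k (fun t => j t.castSucc)
        ⟨j (Fin.last k), by have := (j (Fin.last k)).isLt; omega⟩ := by
  rw [fySelected, fyPerm_succ, Equiv.Perm.mul_apply]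
  simp only [Fin.val_last, Equiv.swap_apply_left]

lemma fySelected_injective (N k : ℕ) (j : ∀ t : Fin k, Fin (N - (t : ℕ))) :
    Function.Injective (fySelected N k j) := by
  intro s t h
  have hs := (j s).isLt
  have ht := (j t).isLt
  have := Fin.mk.inj_iff.mp ((fyPerm N k j).injective h)
  exact Fin.ext (by omega)

theorem injective_fySelected (N : ℕ) : ∀ k, Function.Injective (fySelected N k)
  | 0 => fun _ _ _ => funext fun t => t.elim0
  | k + 1 => by
    intro j j' h
    have hinit : (fun t : Fin k => j t.castSucc) = fun t : Fin k => j' t.castSucc := by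
      refine injective_fySelected N k (funext fun t => ?_)
      simpa only [fySelected_castSucc] using congrFun h t.castSucc
    have hlast : j (Fin.last k) = j' (Fin.last k) := by
      have h_last := congrFun h (Fin.last k)
      rw [fySelected_last, fySelected_last, hinit] at h_last
      exact Fin.ext (Fin.mk.inj_iff.mp ((fyPerm N k _).injective h_last))
    funext t
    induction t using Fin.lastCases with
    | last => exact hlast
    | cast s => exact congrFun hinit s

lemma card_pi_fin_sub_eq_descFactorial (N k : ℕ) :
    Fintype.card (∀ t : Fin k, Fin (N - (t : ℕ))) = N.descFactorial k := by
  simp only [Fintype.card_pi, Fintype.card_fin]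
  rw [Nat.descFactorial_eq_prod_range, Fin.prod_univ_eq_prod_range (fun t => N - t)]

noncomputable def fySelectedEquiv (N k : ℕ) :
    (∀ t : Fin k, Fin (N - (t : ℕ))) ≃ (Fin k ↪ Fin N) :=
  Equiv.ofBijective (fun j => ⟨fySelected N k j, fySelected_injective N k j⟩) <| by
    refine (Fintype.bijective_iff_injective_and_card _).mpr ⟨fun j j' h => ?_, ?_⟩
    · exact injective_fySelected N k (congrArg (⇑) h)
    · rw [card_pi_fin_sub_eq_descFactorial, Fintype.card_embedding_eq, Fintype.card_fin,
        Fintype.card_fin]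

lemma fySelectedSet_eq_map (N k : ℕ) (j : ∀ t : Fin k, Fin (N - (t : ℕ))) :
    univ.filter (fun x : Fin N => N - k ≤ ((fyPerm N k j)⁻¹ x : ℕ)) =
      univ.map (fySelectedEquiv N k j) := by
  ext x
  simp only [mem_filter, mem_univ, true_and, mem_map]
  constructor
  · intro hx
    have hlt := ((fyPerm N k j)⁻¹ x).isLt
    refine ⟨⟨N - 1 - (fyPerm N k j)⁻¹ x, by omega⟩, ?_⟩
    simp only [fySelectedEquiv, Equiv.ofBijective_apply, Function.Embedding.coeFn_mk,
      fySelected]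
    rw [← Equiv.Perm.eq_inv_iff_eq]
    exact Fin.ext (by simp only; omega)
  · rintro ⟨t, rfl⟩
    have ht := (j t).isLt
    simp only [fySelectedEquiv, Equiv.ofBijective_apply, Function.Embedding.coeFn_mk, fySelected,
      Equiv.Perm.coe_inv, Equiv.symm_apply_apply]
    omega

theorem fy_selected_set_uniform_general (N k : ℕ) (S : Finset (Fin N))
    (hS : S.card = k) :
    (Finset.univ.filter fun j : ∀ t : Fin k, Fin (N - (t : ℕ)) =>
        (Finset.univ.filter fun x : Fin N =>
          N - k ≤ (((fyPerm N k j)⁻¹ x : Fin N) : ℕ)) = S).card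
      = Nat.factorial k := by
  calc _ = #{f : Fin k ↪ Fin N | univ.map f = S} :=
        card_equiv (fySelectedEquiv N k) fun j => by
          simp only [mem_filter, mem_univ, true_and, fySelectedSet_eq_map]
    _ = k ! := by
      simpa using card_filter_embedding_map_univ_eq (α := Fin k) S (by rw [hS, Fintype.card_fin])

/-- For every `k`-element subset `S` of `Fin N`, the number of choice
sequences whose selected set `{x : Fin N | (fyPerm N k j)⁻¹ x ≥ N - k}`
equals `S` is exactly `k!`; consequently, under the uniform distribution on
the `∏_{t<k} (N - t) = N! / (N - k)!` choice sequences, each `k`-element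
subset of `{0, …, N-1}` is the selected set with the same probability
`k! (N-k)! / N! = 1 / C(N, k)`: the partial Fisher–Yates shuffle selects a
`k`-subset uniformly at random. -/
theorem fy_selected_set_uniform (N k : ℕ) (hk : k ≤ N) (S : Finset (Fin N))
    (hS : S.card = k) :
    (Finset.univ.filter fun j : ∀ t : Fin k, Fin (N - (t : ℕ)) =>
        (Finset.univ.filter fun x : Fin N =>
          N - k ≤ (((fyPerm N k j)⁻¹ x : Fin N) : ℕ)) = S).card
      = Nat.factorial k :=
  fy_selected_set_uniform_general N k S hS
end
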